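/- Let p be prime, x < p, and write Rad(p-1) = k·p₁···p_s where p₁,...,p_s are distinct primes not dividing k. Then N^□(p,x) ≥ Σ_{i=1}^s N^□_{k·p_i}(p,x) − (s−1)·N^□_k(p,x), where N^□_e(p,x) denotes the number of positive integers n ≤ x that are square-free and e-free modulo p, and N^□(p,x) = N^□_{p-1}(p,x) counts square-free primitive roots up to x. -/

import Mathlib

/-!
Being `e`-free means not being a `q`-th power residue for any prime `q ∣ e`, so it only depends
on the prime divisors of `e`, and `e`-free for `e = ab` means `a`-free and `b`-free. As `p - 1`
and `Rad(p-1) = k·p₁⋯p_s` have the same prime divisors, inside the set `T` of square-free `k`-free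
`n ≤ x` the square-free primitive roots form the intersection of the sets `Aᵢ` of `pᵢ`-free
elements, and `|Aᵢ|` is `N^□_{k·pᵢ}(p,x)`. The union bound applied to the complements `T \ Aᵢ`
gives `|⋂ Aᵢ| ≥ Σᵢ |Aᵢ| − (s−1)|T|`.
-/

open Finset

/-- An integer `n` coprime to `p` is `e`-free if `n ≡ m ^ d (mod p)` with `d ∣ e`
implies `d = 1`. -/
def IsEFree (p e : ℕ) (n : ℕ) : Prop :=
  ∀ (m : ℤ) (d : ℕ), d ∣ e → (n : ZMod p) = (m : ZMod p) ^ d → d = 1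

open Classical in
/-- `NsqFree p e x` is the number of positive integers `n ≤ x` that are square-free
and `e`-free modulo `p`. -/
noncomputable def NsqFree (p e : ℕ) (x : ℝ) : ℕ :=
  ((Finset.Icc 1 ⌊x⌋₊).filter (fun n => Squarefree n ∧ IsEFree p e n)).card

/-- The radical of `m`: the product of the distinct primes dividing `m`. -/
def rad (m : ℕ) : ℕ := ∏ q ∈ m.primeFactors, q

lemma Finset.card_add_sum_card_filter_le {α ι : Type*} (T : Finset α) (I : Finset ι)
    (Q : ι → α → Prop) [∀ i, DecidablePred (Q i)]
    [DecidablePred fun a => ∀ i ∈ I, Q i a] :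
    #T + ∑ i ∈ I, #(T.filter (Q i)) ≤ #(T.filter fun a => ∀ i ∈ I, Q i a) + #I * #T := by
  classical
  have union_bound : #T ≤ #(T.filter fun a => ∀ i ∈ I, Q i a)
      + ∑ i ∈ I, #(T.filter fun a => ¬ Q i a) := by
    calc #T ≤ #((T.filter fun a => ∀ i ∈ I, Q i a)
                ∪ I.biUnion fun i => T.filter fun a => ¬ Q i a) := by
          refine card_le_card fun a ha => ?_
          simpa [ha] using em (∀ i ∈ I, Q i a)
      _ ≤ _ := (card_union_le _ _).trans (Nat.add_le_add_left card_biUnion_le _)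
  have complement : ∀ i ∈ I, #(T.filter fun a => ¬ Q i a) + #(T.filter (Q i)) = #T :=
    fun i _ => by rw [add_comm]; exact card_filter_add_card_filter_not _
  calc #T + ∑ i ∈ I, #(T.filter (Q i))
      ≤ #(T.filter fun a => ∀ i ∈ I, Q i a)
          + ∑ i ∈ I, (#(T.filter fun a => ¬ Q i a) + #(T.filter (Q i))) := by
        rw [sum_add_distrib]; omega
    _ = #(T.filter fun a => ∀ i ∈ I, Q i a) + #I * #T := by
        rw [sum_congr rfl complement, sum_const, smul_eq_mul]

lemma Nat.Prime.dvd_rad_iff {q m : ℕ} (hq : q.Prime) (hm : m ≠ 0) : q ∣ rad m ↔ q ∣ m := by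
  have hrad : rad m ≠ 0 := prod_ne_zero_iff.mpr fun r hr => (prime_of_mem_primeFactors hr).ne_zero
  have : (rad m).primeFactors = m.primeFactors := primeFactors_prod fun _ => prime_of_mem_primeFactors
  rw [← mem_primeFactors_of_ne_zero hrad |>.trans (and_iff_right hq), this,
    mem_primeFactors_of_ne_zero hm, and_iff_right hq]

section EFree

variable {p : ℕ}

lemma isEFree_iff_forall_prime {e n : ℕ} :
    IsEFree p e n ↔ ∀ q : ℕ, q.Prime → q ∣ e → ∀ m : ℤ, (n : ZMod p) ≠ (m : ZMod p) ^ q := by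
  refine ⟨fun h q hq hqe m hm => hq.ne_one (h m q hqe hm), fun h m d hde hnd => ?_⟩
  by_contra hd
  obtain ⟨q, hq, c, rfl⟩ := Nat.exists_prime_and_dvd hd
  refine h q hq (dvd_of_mul_right_dvd hde) (m ^ c) ?_
  rw [hnd, Int.cast_pow, ← pow_mul, mul_comm]

lemma isEFree_congr {e e' : ℕ} (h : ∀ q : ℕ, q.Prime → (q ∣ e ↔ q ∣ e')) (n : ℕ) :
    IsEFree p e n ↔ IsEFree p e' n := by
  simp only [isEFree_iff_forall_prime]
  exact forall_congr' fun q => imp_congr_right fun hq => by rw [h q hq]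

lemma isEFree_rad {m : ℕ} (hm : m ≠ 0) (n : ℕ) : IsEFree p (rad m) n ↔ IsEFree p m n :=
  isEFree_congr (fun _ hq => hq.dvd_rad_iff hm) n

lemma isEFree_one (n : ℕ) : IsEFree p 1 n :=
  fun _ _ hd _ => Nat.dvd_one.mp hd

lemma isEFree_mul_iff {a b n : ℕ} : IsEFree p (a * b) n ↔ IsEFree p a n ∧ IsEFree p b n := by
  simp only [isEFree_iff_forall_prime]
  refine ⟨fun h => ⟨fun q hq hqa => h q hq (dvd_mul_of_dvd_left hqa b),
    fun q hq hqb => h q hq (dvd_mul_of_dvd_right hqb a)⟩, fun ⟨ha, hb⟩ q hq hqab => ?_⟩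
  rcases hq.dvd_mul.mp hqab with hqa | hqb
  exacts [ha q hq hqa, hb q hq hqb]

lemma isEFree_prod_iff {ι : Type*} (I : Finset ι) (f : ι → ℕ) (n : ℕ) :
    IsEFree p (∏ i ∈ I, f i) n ↔ ∀ i ∈ I, IsEFree p (f i) n := by
  classical
  induction I using Finset.induction_on with
  | empty => simpa using isEFree_one n
  | insert j I hj ih => rw [prod_insert hj, isEFree_mul_iff, ih, forall_mem_insert]

end EFree

open Classical in
noncomputable def sqfreeEFreeUpTo (p e : ℕ) (x : ℝ) : Finset ℕ :=
  (Icc 1 ⌊x⌋₊).filter fun n => Squarefree n ∧ IsEFree p e n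

lemma nsqFree_eq_card (p e : ℕ) (x : ℝ) : NsqFree p e x = #(sqfreeEFreeUpTo p e x) := rfl

lemma nsqFree_eq_card_filter {p e a : ℕ} (x : ℝ) {R : ℕ → Prop} [DecidablePred R]
    (h : ∀ n, IsEFree p e n ↔ IsEFree p a n ∧ R n) :
    NsqFree p e x = #((sqfreeEFreeUpTo p a x).filter R) := by
  classical
  rw [nsqFree_eq_card, sqfreeEFreeUpTo, sqfreeEFreeUpTo, filter_filter]
  simp only [h, and_assoc]

theorem sieve_inequality_general (p : ℕ) (hp : p.Prime) (x : ℝ)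
    (k s : ℕ) (P : Fin s → ℕ) (hrad : rad (p - 1) = k * ∏ i, P i) :
    (NsqFree p (p - 1) x : ℝ) ≥
      (∑ i, (NsqFree p (k * P i) x : ℝ)) - ((s : ℝ) - 1) * (NsqFree p k x : ℝ) := by
  classical
  have hfull (n : ℕ) : IsEFree p (p - 1) n ↔ IsEFree p k n ∧ ∀ i ∈ univ, IsEFree p (P i) n := by
    rw [← isEFree_rad (Nat.sub_ne_zero_of_lt hp.one_lt), hrad, isEFree_mul_iff, isEFree_prod_iff]
  have hpart (i : Fin s) : NsqFree p (k * P i) x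
      = #((sqfreeEFreeUpTo p k x).filter (IsEFree p (P i))) :=
    nsqFree_eq_card_filter x fun _ => isEFree_mul_iff
  have hsieve := card_add_sum_card_filter_le (sqfreeEFreeUpTo p k x) univ fun i => IsEFree p (P i)
  rw [card_univ, Fintype.card_fin, ← nsqFree_eq_card_filter x hfull, ← nsqFree_eq_card] at hsieve
  simp only [← hpart] at hsieve
  have hsieve_real := (Nat.cast_le (α := ℝ)).mpr hsieve
  push_cast at hsieve_real
  linarith

/-- Sieving inequality: if `Rad(p-1) = k·p₁⋯p_s` with `p₁,…,p_s` distinct primes not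
dividing `k`, then `N^□(p,x) ≥ Σᵢ N^□_{k·pᵢ}(p,x) − (s−1)·N^□_k(p,x)`, where
`N^□(p,x) = N^□_{p-1}(p,x)` counts square-free primitive roots up to `x`. -/
theorem sieve_inequality (p : ℕ) (hp : p.Prime) (x : ℝ) (hxp : x < p)
    (k s : ℕ) (P : Fin s → ℕ) (hP : ∀ i, (P i).Prime) (hPinj : Function.Injective P)
    (hPk : ∀ i, ¬ P i ∣ k) (hrad : rad (p - 1) = k * ∏ i, P i) :
    (NsqFree p (p - 1) x : ℝ) ≥
      (∑ i, (NsqFree p (k * P i) x : ℝ)) - ((s : ℝ) - 1) * (NsqFree p k x : ℝ) :=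
  sieve_inequality_general p hp x k s P hrad
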